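/- arXiv:2102.02244 — 4 statements merged into one kernel-verified Lean document; each statement's English description precedes it below -/
import Mathlib

section
/- The volume of a sum-rank-metric sphere of radius t satisfies Vol_{S_ℓ}(t) ≥ q^{(m+η-t/ℓ)t - ℓ/4} · γ_q^{-ℓ}, and hence the same lower bound holds for the ball volume Vol_{B_ℓ}(t). -/
/-!
Split the radius as evenly as possible over the blocks, `t = t₁ + ⋯ + t_ℓ` with every
`tᵢ ∈ {⌊t/ℓ⌋, ⌈t/ℓ⌉}`. Vectors whose `i`-th block has rank exactly `tᵢ` all have sum-rank weight
`t`, and a block of rank `r` can be chosen as `r` linearly independent entries followed by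
`η - r` combinations of them, which gives at least `q^(r(m+η-r)) / γ_q` blocks. Multiplying
over the blocks, the exponent is `(m+η)t - ∑ tᵢ²`, and the balanced split has
`∑ tᵢ² ≤ t²/ℓ + ℓ/4`.
-/

/-- `γ_q = ∏_{i=1}^∞ (1 - q^{-i})^{-1}`. -/
noncomputable def gammaq (q : ℕ) : ℝ := ∏' i : ℕ, (1 - (q : ℝ)⁻¹ ^ (i + 1))⁻¹

/-- Rank weight of a block `v ∈ Fqm^η`: the `Fq`-dimension of the span of its entries. -/
noncomputable def rkw (Fq : Type) {Fqm : Type} [Field Fq] [Field Fqm] [Algebra Fq Fqm]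
    {η : ℕ} (v : Fin η → Fqm) : ℕ :=
  Module.finrank Fq (Submodule.span Fq (Set.range v))

/-- Sum-rank weight of a vector in `Fqm^(ℓη)`, given as `ℓ` blocks of length `η`. -/
noncomputable def srw (Fq : Type) {Fqm : Type} [Field Fq] [Field Fqm] [Algebra Fq Fqm]
    {ℓ η : ℕ} (x : Fin ℓ → Fin η → Fqm) : ℕ :=
  ∑ i, rkw Fq (x i)

/-- Number of vectors in `Fqm^(ℓη)` of sum-rank weight exactly `t`. -/
noncomputable def VolS (Fq Fqm : Type) [Field Fq] [Field Fqm] [Algebra Fq Fqm]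
    (ℓ η t : ℕ) : ℕ :=
  Nat.card {x : Fin ℓ → Fin η → Fqm // srw Fq x = t}

/-- Number of vectors in `Fqm^(ℓη)` of sum-rank weight at most `t`. -/
noncomputable def VolB (Fq Fqm : Type) [Field Fq] [Field Fqm] [Algebra Fq Fqm]
    (ℓ η t : ℕ) : ℕ :=
  Nat.card {x : Fin ℓ → Fin η → Fqm // srw Fq x ≤ t}

open Finset Module Submodule

section Gamma

variable {q : ℕ}

lemma inv_pow_succ_lt_one (hq : 1 < q) (j : ℕ) : (q : ℝ)⁻¹ ^ (j + 1) < 1 :=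
  pow_lt_one₀ (by positivity) (inv_lt_one_of_one_lt₀ (by exact_mod_cast hq)) (by omega)

lemma one_le_gammaq_factor (hq : 1 < q) (j : ℕ) : 1 ≤ (1 - (q : ℝ)⁻¹ ^ (j + 1))⁻¹ :=
  (one_le_inv₀ (sub_pos.2 (inv_pow_succ_lt_one hq j))).2 (by simp)

lemma summable_log_gammaq_factor (hq : 1 < q) :
    Summable fun j : ℕ ↦ Real.log (1 - (q : ℝ)⁻¹ ^ (j + 1))⁻¹ := by
  have hgeom : Summable fun j : ℕ ↦ (q : ℝ)⁻¹ ^ (j + 1) :=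
    (summable_nat_add_iff 1).2 <| summable_geometric_of_lt_one (by positivity)
      (inv_lt_one_of_one_lt₀ (by exact_mod_cast hq))
  simp_rw [Real.log_inv, sub_eq_add_neg]
  exact (Real.summable_log_one_add_of_summable hgeom.neg).neg

lemma prod_range_le_gammaq (hq : 1 < q) (r : ℕ) :
    ∏ j ∈ range r, (1 - (q : ℝ)⁻¹ ^ (j + 1))⁻¹ ≤ gammaq q := by
  have hpos j := zero_lt_one.trans_le (one_le_gammaq_factor hq j)
  rw [gammaq, ← Real.rexp_tsum_eq_tprod hpos (summable_log_gammaq_factor hq)]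
  calc ∏ j ∈ range r, (1 - (q : ℝ)⁻¹ ^ (j + 1))⁻¹
      = Real.exp (∑ j ∈ range r, Real.log (1 - (q : ℝ)⁻¹ ^ (j + 1))⁻¹) := by
        rw [Real.exp_sum]; exact prod_congr rfl fun j _ ↦ (Real.exp_log (hpos j)).symm
    _ ≤ _ := Real.exp_le_exp.2 <| (summable_log_gammaq_factor hq).sum_le_tsum _
        fun j _ ↦ Real.log_nonneg (one_le_gammaq_factor hq j)

lemma gammaq_pos (hq : 1 < q) : 0 < gammaq q := by
  simpa using zero_lt_one.trans_le (prod_range_le_gammaq hq 0)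

lemma inv_gammaq_le_prod_range (hq : 1 < q) (r : ℕ) :
    (gammaq q)⁻¹ ≤ ∏ j ∈ range r, (1 - (q : ℝ)⁻¹ ^ (j + 1)) := by
  rw [inv_le_comm₀ (gammaq_pos hq)
    (prod_pos fun j _ ↦ sub_pos.2 (inv_pow_succ_lt_one hq j)), ← prod_inv_distrib]
  exact prod_range_le_gammaq hq r

lemma pow_mul_div_gammaq_le_prod (hq : 1 < q) {m r : ℕ} (hrm : r ≤ m) :
    (q : ℝ) ^ (m * r) / gammaq q ≤ ∏ i ∈ range r, ((q : ℝ) ^ m - (q : ℝ) ^ i) := by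
  have hq0 : (q : ℝ) ≠ 0 := by positivity
  have hfactor : ∀ j ∈ range r,
      (q : ℝ) ^ m * (1 - (q : ℝ)⁻¹ ^ (j + 1)) ≤ (q : ℝ) ^ m - (q : ℝ) ^ (r - 1 - j) := by
    intro j hj
    have hj : j < r := mem_range.1 hj
    rw [mul_sub, mul_one, inv_pow, ← pow_sub₀ _ hq0 (show j + 1 ≤ m by omega)]
    exact sub_le_sub_left (pow_le_pow_right₀ (by exact_mod_cast hq.le) (by omega)) _
  calc (q : ℝ) ^ (m * r) / gammaq q
      ≤ (q : ℝ) ^ (m * r) * ∏ j ∈ range r, (1 - (q : ℝ)⁻¹ ^ (j + 1)) := by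
        rw [div_eq_mul_inv]; gcongr; exact inv_gammaq_le_prod_range hq r
    _ = ∏ j ∈ range r, (q : ℝ) ^ m * (1 - (q : ℝ)⁻¹ ^ (j + 1)) := by
        rw [prod_mul_distrib, prod_const, card_range, pow_mul]
    _ ≤ ∏ j ∈ range r, ((q : ℝ) ^ m - (q : ℝ) ^ (r - 1 - j)) :=
        prod_le_prod (fun j _ ↦ mul_nonneg (by positivity)
          (sub_pos.2 (inv_pow_succ_lt_one hq j)).le) hfactor
    _ = ∏ i ∈ range r, ((q : ℝ) ^ m - (q : ℝ) ^ i) :=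
        prod_range_reflect (fun i ↦ (q : ℝ) ^ m - (q : ℝ) ^ i) r

end Gamma

section Count

variable {K V : Type*} [Field K] [Fintype K] [AddCommGroup V] [Module K V] [Finite V]

lemma card_linearIndependent_mul_le_card_finrank_span {ι : Type*} [Fintype ι] (r : ℕ) :
    Nat.card {s : Fin r → V // LinearIndependent K s} * (Fintype.card K ^ r) ^ Fintype.card ι ≤
      Nat.card {v : Fin r ⊕ ι → V // finrank K (span K (Set.range v)) = r} := by
  have hspan (s : Fin r → V) (c : ι → Fin r → K) :
      span K (Set.range (Sum.elim s fun i ↦ ∑ j, c i j • s j)) = span K (Set.range s) := by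
    rw [Set.Sum.elim_range, span_union, sup_eq_left, span_le, Set.range_subset_iff]
    exact fun i ↦ sum_mem fun j _ ↦ smul_mem _ _ (subset_span (Set.mem_range_self j))
  let f : {s : Fin r → V // LinearIndependent K s} × (ι → Fin r → K) →
      {v : Fin r ⊕ ι → V // finrank K (span K (Set.range v)) = r} := fun p ↦
    ⟨Sum.elim p.1.1 fun i ↦ ∑ j, p.2 i j • p.1.1 j, by
      rw [hspan, finrank_span_eq_card p.1.2, Fintype.card_fin]⟩
  have hf : Function.Injective f := by
    rintro ⟨s, c⟩ ⟨s', c'⟩ h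
    have hv := congrArg Subtype.val h
    have hs : s = s' := Subtype.ext (funext fun j ↦ by simpa [f] using congrFun hv (Sum.inl j))
    subst hs
    refine Prod.ext rfl (funext fun i ↦ ?_)
    have := congrFun hv (Sum.inr i)
    exact funext (Fintype.linearIndependent_iffₛ.1 s.2 _ _ (by simpa [f] using this))
  have := Nat.card_le_card_of_injective f hf
  rwa [Nat.card_prod, Nat.card_fun, Nat.card_fun, Nat.card_eq_fintype_card (α := K),
    Nat.card_eq_fintype_card (α := ι), Nat.card_fin] at this

lemma div_gammaq_le_card_finrank_span_eq {η r : ℕ} (hrV : r ≤ finrank K V) (hrη : r ≤ η) :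
    (Fintype.card K : ℝ) ^ (r * (finrank K V + η - r)) / gammaq (Fintype.card K) ≤
      Nat.card {v : Fin η → V // finrank K (span K (Set.range v)) = r} := by
  set q := Fintype.card K
  have hq : 1 < q := Fintype.one_lt_card
  have e : Fin r ⊕ Fin (η - r) ≃ Fin η := finSumFinEquiv.trans (finCongr (by omega))
  have hreindex : Nat.card {v : Fin r ⊕ Fin (η - r) → V // finrank K (span K (Set.range v)) = r} =
      Nat.card {v : Fin η → V // finrank K (span K (Set.range v)) = r} :=
    Nat.card_congr <| Equiv.subtypeEquiv (e.arrowCongr (Equiv.refl V)) fun v ↦ by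
      show _ ↔ finrank K (span K (Set.range (v ∘ e.symm))) = r
      rw [e.symm.surjective.range_comp]
  have hcount := card_linearIndependent_mul_le_card_finrank_span (K := K) (V := V)
    (ι := Fin (η - r)) r
  rw [card_linearIndependent hrV, Fintype.card_fin, hreindex] at hcount
  have hcast : ((∏ i : Fin r, (q ^ finrank K V - q ^ (i : ℕ)) : ℕ) : ℝ) =
      ∏ i ∈ range r, ((q : ℝ) ^ finrank K V - (q : ℝ) ^ i) := by
    rw [Nat.cast_prod, Fin.prod_univ_eq_prod_range (fun i ↦ ((q ^ finrank K V - q ^ i : ℕ) : ℝ))]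
    refine prod_congr rfl fun i hi ↦ ?_
    rw [Nat.cast_sub (Nat.pow_le_pow_right hq.le (by simp at hi; omega))]
    push_cast; rfl
  calc (q : ℝ) ^ (r * (finrank K V + η - r)) / gammaq q
      = (q : ℝ) ^ (finrank K V * r) / gammaq q * ((q : ℝ) ^ r) ^ (η - r) := by
        rw [← pow_mul, div_mul_eq_mul_div, ← pow_add]; congr 2
        rw [Nat.add_sub_assoc hrη, Nat.mul_add, mul_comm]
    _ ≤ (∏ i ∈ range r, ((q : ℝ) ^ finrank K V - (q : ℝ) ^ i)) * ((q : ℝ) ^ r) ^ (η - r) := by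
        gcongr; exact pow_mul_div_gammaq_le_prod hq hrV
    _ ≤ _ := by rw [← hcast]; exact_mod_cast hcount

end Count

lemma finrank_eq_of_card_eq_pow {K V : Type*} [Field K] [Fintype K] [AddCommGroup V] [Module K V]
    [Fintype V] {q m : ℕ} (hq : Fintype.card K = q) (hV : Fintype.card V = q ^ m) :
    finrank K V = m := by
  have := Module.card_eq_pow_finrank (K := K) (V := V)
  rw [hq, hV] at this
  exact (Nat.pow_right_injective (hq ▸ Fintype.one_lt_card) this).symm

lemma exists_balanced_composition {ℓ μ t : ℕ} (hℓ : 0 < ℓ) (ht : t ≤ ℓ * μ) :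
    ∃ T : Fin ℓ → ℕ, (∀ i, T i ≤ μ) ∧ ∑ i, T i = t ∧ 4 * ℓ * ∑ i, T i ^ 2 ≤ 4 * t ^ 2 + ℓ ^ 2 := by
  set a := t / ℓ
  set s := t % ℓ
  have hs : s < ℓ := Nat.mod_lt t hℓ
  have ht' : ℓ * a + s = t := Nat.div_add_mod t ℓ
  set b : Fin ℓ → ℕ := fun i ↦ if (i : ℕ) < s then 1 else 0
  have hb_sum : ∑ i, b i = s := by
    simp only [b, sum_boole, Fin.card_filter_val_lt, Nat.cast_id]; omega
  have hb_sq i : b i ^ 2 = b i := by simp only [b]; split_ifs <;> rfl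
  refine ⟨fun i ↦ a + b i, fun i ↦ ?_, ?_, ?_⟩
  · by_cases hi : (i : ℕ) < s
    · have : ℓ * a < ℓ * μ := by omega
      simp only [b, if_pos hi]; exact Nat.lt_of_mul_lt_mul_left this
    · have : ℓ * a ≤ ℓ * μ := by omega
      simp only [b, if_neg hi, add_zero]; exact Nat.le_of_mul_le_mul_left this hℓ
  · rw [sum_add_distrib, hb_sum, sum_const, card_univ, Fintype.card_fin, smul_eq_mul, ht']
  · have hsq : ∑ i, (a + b i) ^ 2 = ℓ * a ^ 2 + (2 * a + 1) * s := by
      simp only [add_sq, hb_sq, sum_add_distrib, ← mul_sum, hb_sum, sum_const,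
        card_univ, Fintype.card_fin, smul_eq_mul]
      ring
    rw [hsq, ← ht']
    zify [hs.le]
    nlinarith [sq_nonneg ((ℓ : ℤ) - 2 * s)]

lemma sub_div_mul_sub_le_sum_mul_sub {ℓ n t : ℕ} (hℓ : 0 < ℓ) {T : Fin ℓ → ℕ}
    (hTn : ∀ i, T i ≤ n) (hsum : ∑ i, T i = t)
    (hsq : 4 * ℓ * ∑ i, T i ^ 2 ≤ 4 * t ^ 2 + ℓ ^ 2) :
    ((n : ℝ) - t / ℓ) * t - ℓ / 4 ≤ ((∑ i, T i * (n - T i) : ℕ) : ℝ) := by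
  have hℓ' : (0 : ℝ) < ℓ := by exact_mod_cast hℓ
  have hsq' : (4 * ℓ * ∑ i, (T i : ℝ) ^ 2) ≤ 4 * (t : ℝ) ^ 2 + (ℓ : ℝ) ^ 2 := by exact_mod_cast hsq
  have hsum' : ∑ i, (T i : ℝ) = t := by exact_mod_cast hsum
  have hexp : ((∑ i, T i * (n - T i) : ℕ) : ℝ) = n * t - ∑ i, (T i : ℝ) ^ 2 := by
    push_cast [Nat.cast_sub (hTn _)]
    simp only [mul_sub, sum_sub_distrib, ← hsum', mul_sum, mul_comm, sq]
  have hbound : ∑ i, (T i : ℝ) ^ 2 ≤ t * t / ℓ + ℓ / 4 := by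
    rw [div_add_div _ _ hℓ'.ne' four_ne_zero, le_div_iff₀ (by positivity)]
    linarith
  rw [hexp, sub_mul, div_mul_eq_mul_div]
  linarith

lemma prod_card_eq_le_card_sum_eq {ι α : Type*} [Fintype ι] [Finite α] (w : α → ℕ) (T : ι → ℕ) :
    ∏ i, Nat.card {a // w a = T i} ≤ Nat.card {x : ι → α // ∑ i, w (x i) = ∑ i, T i} := by
  rw [← Nat.card_pi]
  exact Nat.card_le_card_of_injective
    (fun p ↦ ⟨fun i ↦ (p i).1, sum_congr rfl fun i _ ↦ (p i).2⟩)
    fun p p' h ↦ funext fun i ↦ Subtype.ext (congrFun (congrArg Subtype.val h) i)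

lemma VolS_le_VolB (Fq Fqm : Type) [Field Fq] [Field Fqm] [Fintype Fqm] [Algebra Fq Fqm]
    (ℓ η t : ℕ) : VolS Fq Fqm ℓ η t ≤ VolB Fq Fqm ℓ η t :=
  Nat.card_le_card_of_injective _ (Subtype.impEmbedding _ _ fun _ ↦ le_of_eq).injective

theorem stmt7_general (q m ℓ η t : ℕ) (Fq Fqm : Type) [Field Fq] [Fintype Fq] [Field Fqm]
    [Fintype Fqm] [Algebra Fq Fqm] (hq : Fintype.card Fq = q)
    (hqm : Fintype.card Fqm = q ^ m) (hℓ : 0 < ℓ)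
    (ht : t ≤ ℓ * min m η) :
    (q : ℝ) ^ ((((m : ℝ) + η) - (t : ℝ) / ℓ) * t - (ℓ : ℝ) / 4) * ((gammaq q) ^ ℓ)⁻¹ ≤
        (VolS Fq Fqm ℓ η t : ℝ) ∧
      (q : ℝ) ^ ((((m : ℝ) + η) - (t : ℝ) / ℓ) * t - (ℓ : ℝ) / 4) * ((gammaq q) ^ ℓ)⁻¹ ≤
        (VolB Fq Fqm ℓ η t : ℝ) := by
  have hq1 : 1 < q := hq ▸ Fintype.one_lt_card
  have hm : finrank Fq Fqm = m := finrank_eq_of_card_eq_pow hq hqm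
  obtain ⟨T, hTμ, hsum, hsq⟩ := exists_balanced_composition hℓ ht
  have hblock i : (q : ℝ) ^ (T i * (m + η - T i)) / gammaq q ≤
      Nat.card {v : Fin η → Fqm // rkw Fq v = T i} := by
    have := div_gammaq_le_card_finrank_span_eq (K := Fq) (V := Fqm)
      (hm ▸ (hTμ i).trans (min_le_left _ _)) ((hTμ i).trans (min_le_right _ _))
    rwa [hq, hm] at this
  have hexp := sub_div_mul_sub_le_sum_mul_sub (n := m + η) hℓ
    (fun i ↦ (hTμ i).trans ((min_le_left _ _).trans (Nat.le_add_right m η))) hsum hsq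
  rw [Nat.cast_add] at hexp
  have hS : (q : ℝ) ^ ((((m : ℝ) + η) - (t : ℝ) / ℓ) * t - (ℓ : ℝ) / 4) * ((gammaq q) ^ ℓ)⁻¹ ≤
      (VolS Fq Fqm ℓ η t : ℝ) := calc
    _ ≤ (q : ℝ) ^ (∑ i, T i * (m + η - T i)) * ((gammaq q) ^ ℓ)⁻¹ := by
        refine mul_le_mul_of_nonneg_right ?_ (inv_pos.2 (pow_pos (gammaq_pos hq1) ℓ)).le
        rw [← Real.rpow_natCast]
        exact Real.rpow_le_rpow_of_exponent_le (by exact_mod_cast hq1.le) hexp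
    _ = ∏ i, (q : ℝ) ^ (T i * (m + η - T i)) / gammaq q := by
        rw [prod_div_distrib, prod_pow_eq_pow_sum, prod_const, card_univ, Fintype.card_fin,
          div_eq_mul_inv]
    _ ≤ ∏ i, (Nat.card {v : Fin η → Fqm // rkw Fq v = T i} : ℝ) :=
        prod_le_prod (fun i _ ↦ div_nonneg (by positivity) (gammaq_pos hq1).le) fun i _ ↦ hblock i
    _ ≤ VolS Fq Fqm ℓ η t := by
        rw [← Nat.cast_prod, ← hsum]
        exact_mod_cast prod_card_eq_le_card_sum_eq (rkw Fq) T
  exact ⟨hS, hS.trans (by exact_mod_cast VolS_le_VolB Fq Fqm ℓ η t)⟩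

theorem stmt7 (q m ℓ η t : ℕ) (Fq Fqm : Type) [Field Fq] [Fintype Fq] [Field Fqm]
    [Fintype Fqm] [Algebra Fq Fqm] (hq : Fintype.card Fq = q)
    (hqm : Fintype.card Fqm = q ^ m) (hℓ : 0 < ℓ) (hη : 0 < η) (hm : 0 < m)
    (ht : t ≤ ℓ * min m η) :
    (q : ℝ) ^ ((((m : ℝ) + η) - (t : ℝ) / ℓ) * t - (ℓ : ℝ) / 4) * ((gammaq q) ^ ℓ)⁻¹ ≤
        (VolS Fq Fqm ℓ η t : ℝ) ∧
      (q : ℝ) ^ ((((m : ℝ) + η) - (t : ℝ) / ℓ) * t - (ℓ : ℝ) / 4) * ((gammaq q) ^ ℓ)⁻¹ ≤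
        (VolB Fq Fqm ℓ η t : ℝ) :=
  stmt7_general q m ℓ η t Fq Fqm hq hqm hℓ ht
end

section
/- If ℓ divides t, then the sum-rank sphere volume satisfies Vol_{S_ℓ}(t) ≥ q^{(m+η-t/ℓ)t} · γ_q^{-ℓ}. -/
/-! ### Auxiliary results on `gammaq` -/

section gamma

variable {q : ℕ}

private lemma x_pos (hq : 2 ≤ q) : (0:ℝ) < (q:ℝ)⁻¹ := by
  have : (0:ℝ) < q := by exact_mod_cast Nat.lt_of_lt_of_le (by norm_num) hq
  positivity

private lemma x_le_half (hq : 2 ≤ q) : (q:ℝ)⁻¹ ≤ 1/2 := by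
  have h2 : (2:ℝ) ≤ q := by exact_mod_cast hq
  rw [one_div]
  exact inv_anti₀ (by norm_num) h2

private lemma pow_le_x (hq : 2 ≤ q) (i : ℕ) : (q:ℝ)⁻¹ ^ (i+1) ≤ (q:ℝ)⁻¹ := by
  have hx0 := x_pos hq
  have hx2 := x_le_half hq
  calc (q:ℝ)⁻¹ ^ (i+1) ≤ (q:ℝ)⁻¹ ^ 1 :=
        pow_le_pow_of_le_one hx0.le (by linarith) (by omega)
    _ = (q:ℝ)⁻¹ := pow_one _

private lemma fac_pos (hq : 2 ≤ q) (i : ℕ) : (0:ℝ) < 1 - (q:ℝ)⁻¹ ^ (i+1) := by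
  have := pow_le_x hq i
  have := x_le_half hq
  linarith

private lemma fac_le_one (hq : 2 ≤ q) (i : ℕ) : 1 - (q:ℝ)⁻¹ ^ (i+1) ≤ 1 := by
  have := pow_nonneg (x_pos hq).le (i+1)
  linarith

private lemma g_one_le (hq : 2 ≤ q) (i : ℕ) : (1:ℝ) ≤ (1 - (q:ℝ)⁻¹ ^ (i+1))⁻¹ :=
  (one_le_inv₀ (fac_pos hq i)).mpr (fac_le_one hq i)

private lemma prod_g_le (hq : 2 ≤ q) (s : Finset ℕ) :
    ∏ i ∈ s, (1 - (q:ℝ)⁻¹ ^ (i+1))⁻¹ ≤ Real.exp 2 := by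
  set x := (q:ℝ)⁻¹ with hxdef
  have hx0 := x_pos hq
  have hx2 := x_le_half hq
  have step : ∀ i : ℕ, (1 - x ^ (i+1))⁻¹ ≤ Real.exp (2 * x ^ (i+1)) := by
    intro i
    have hy0 : (0:ℝ) ≤ x ^ (i+1) := by positivity
    have hy2 : x ^ (i+1) ≤ 1/2 := le_trans (pow_le_x hq i) hx2
    have h1 : (1 - x ^ (i+1))⁻¹ ≤ 1 + 2 * x ^ (i+1) := by
      rw [inv_eq_one_div, div_le_iff₀ (fac_pos hq i)]
      nlinarith
    calc (1 - x ^ (i+1))⁻¹ ≤ 1 + 2 * x ^ (i+1) := h1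
      _ ≤ Real.exp (2 * x ^ (i+1)) := by
          have := Real.add_one_le_exp (2 * x ^ (i+1)); linarith
  calc ∏ i ∈ s, (1 - x ^ (i+1))⁻¹ ≤ ∏ i ∈ s, Real.exp (2 * x ^ (i+1)) := by
        apply Finset.prod_le_prod (fun i _ => (inv_pos.mpr (fac_pos hq i)).le) (fun i _ => step i)
    _ = Real.exp (∑ i ∈ s, 2 * x ^ (i+1)) := (Real.exp_sum s _).symm
    _ ≤ Real.exp 2 := by
        apply Real.exp_le_exp.mpr
        have hsummable : Summable (fun i : ℕ => 2 * x ^ (i+1)) := by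
          have : Summable (fun i : ℕ => x ^ i) := summable_geometric_of_lt_one hx0.le (by linarith)
          exact ((this.mul_left x).mul_left 2).congr (fun i => by ring)
        have hle : ∑ i ∈ s, 2 * x ^ (i+1) ≤ ∑' i : ℕ, 2 * x ^ (i+1) :=
          Summable.sum_le_tsum s (fun i _ => by positivity) hsummable
        have htsum : ∑' i : ℕ, 2 * x ^ (i+1) = 2 * x * (1 - x)⁻¹ := by
          have h1 : ∑' i : ℕ, 2 * x ^ (i+1) = ∑' i : ℕ, (2*x) * x ^ i := by
            congr 1; funext i; ring
          rw [h1, tsum_mul_left, tsum_geometric_of_lt_one hx0.le (by linarith)]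
        have hfin : 2 * x * (1 - x)⁻¹ ≤ 2 := by
          rw [← div_eq_mul_inv, div_le_iff₀ (by linarith)]
          nlinarith
        linarith

private lemma prodP_mono (hq : 2 ≤ q) :
    Monotone (fun s : Finset ℕ => ∏ i ∈ s, (1 - (q:ℝ)⁻¹ ^ (i+1))⁻¹) := by
  intro s t hst
  have h1 : ∏ i ∈ s, (1 - (q:ℝ)⁻¹ ^ (i+1))⁻¹ ≤ ∏ i ∈ t, (1 - (q:ℝ)⁻¹ ^ (i+1))⁻¹ := by
    rw [← Finset.prod_sdiff hst]
    have hone : (1:ℝ) ≤ ∏ i ∈ t \ s, (1 - (q:ℝ)⁻¹ ^ (i+1))⁻¹ := by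
      calc (1:ℝ) = ∏ _i ∈ t \ s, (1:ℝ) := (Finset.prod_const_one).symm
        _ ≤ _ := Finset.prod_le_prod (fun i _ => by norm_num) (fun i _ => g_one_le hq i)
    have hpos : (0:ℝ) ≤ ∏ i ∈ s, (1 - (q:ℝ)⁻¹ ^ (i+1))⁻¹ :=
      Finset.prod_nonneg (fun i _ => (inv_pos.mpr (fac_pos hq i)).le)
    nlinarith
  exact h1

private lemma hasProd_g (hq : 2 ≤ q) :
    HasProd (fun i : ℕ => (1 - (q:ℝ)⁻¹ ^ (i+1))⁻¹)
      (⨆ s : Finset ℕ, ∏ i ∈ s, (1 - (q:ℝ)⁻¹ ^ (i+1))⁻¹) := by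
  apply tendsto_atTop_ciSup (prodP_mono hq)
  exact ⟨Real.exp 2, by rintro _ ⟨s, rfl⟩; exact prod_g_le hq s⟩

private lemma gammaq_eq (hq : 2 ≤ q) :
    gammaq q = ⨆ s : Finset ℕ, ∏ i ∈ s, (1 - (q:ℝ)⁻¹ ^ (i+1))⁻¹ :=
  (hasProd_g hq).tprod_eq

private lemma prod_le_gammaq (hq : 2 ≤ q) (s : Finset ℕ) :
    ∏ i ∈ s, (1 - (q:ℝ)⁻¹ ^ (i+1))⁻¹ ≤ gammaq q := by
  rw [gammaq_eq hq]
  exact le_ciSup ⟨Real.exp 2, by rintro _ ⟨u, rfl⟩; exact prod_g_le hq u⟩ s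

lemma one_le_gammaq (hq : 2 ≤ q) : 1 ≤ gammaq q := by
  have := prod_le_gammaq hq ∅
  simpa using this

lemma gammaq_inv_le (hq : 2 ≤ q) (s : Finset ℕ) :
    (gammaq q)⁻¹ ≤ ∏ i ∈ s, (1 - (q:ℝ)⁻¹ ^ (i+1)) := by
  have hP : (0:ℝ) < ∏ i ∈ s, (1 - (q:ℝ)⁻¹ ^ (i+1)) :=
    Finset.prod_pos (fun i _ => fac_pos hq i)
  have h1 : (∏ i ∈ s, (1 - (q:ℝ)⁻¹ ^ (i+1)))⁻¹ ≤ gammaq q := by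
    rw [← Finset.prod_inv_distrib]
    exact prod_le_gammaq hq s
  calc (gammaq q)⁻¹ ≤ ((∏ i ∈ s, (1 - (q:ℝ)⁻¹ ^ (i+1)))⁻¹)⁻¹ :=
        inv_anti₀ (by positivity) h1
    _ = _ := inv_inv _

end gamma

/-! ### Counting vectors of given rank weight -/

section count

variable {Fq Fqm : Type} [Field Fq] [Fintype Fq] [Field Fqm] [Fintype Fqm] [Algebra Fq Fqm]
variable {r η : ℕ}

set_option linter.unusedSectionVars false

/-- Extend an `r`-tuple to an `η`-tuple, filling remaining slots with given
linear combinations of the first `r` entries. -/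
noncomputable def extPt (s : Fin r → Fqm) (c : Fin (η - r) → Fin r → Fq) : Fin η → Fqm :=
  fun j => if h : (j : ℕ) < r then s ⟨j, h⟩
    else ∑ i, c ⟨(j : ℕ) - r, by have := j.2; omega⟩ i • s i

lemma extPt_rkw (hrη : r ≤ η) {s : Fin r → Fqm} (hs : LinearIndependent Fq s)
    (c : Fin (η - r) → Fin r → Fq) : rkw Fq (extPt s c) = r := by
  have hspan : Submodule.span Fq (Set.range (extPt s c)) = Submodule.span Fq (Set.range s) := by
    apply le_antisymm
    · rw [Submodule.span_le]
      rintro _ ⟨j, rfl⟩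
      unfold extPt
      split_ifs with h
      · exact Submodule.subset_span ⟨_, rfl⟩
      · exact Submodule.sum_mem _ fun i _ =>
          Submodule.smul_mem _ _ (Submodule.subset_span ⟨i, rfl⟩)
    · apply Submodule.span_mono
      rintro _ ⟨i, rfl⟩
      refine ⟨⟨(i : ℕ), lt_of_lt_of_le i.2 hrη⟩, ?_⟩
      unfold extPt
      rw [dif_pos i.2]
  rw [rkw, hspan, finrank_span_eq_card hs, Fintype.card_fin]

lemma extPt_injective (hrη : r ≤ η) :
    Function.Injective
      (fun p : { s : Fin r → Fqm // LinearIndependent Fq s } × (Fin (η - r) → Fin r → Fq) =>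
        extPt (p.1 : Fin r → Fqm) p.2) := by
  rintro ⟨⟨s, hs⟩, c⟩ ⟨⟨s', hs'⟩, c'⟩ h
  simp only at h
  have hss : s = s' := by
    funext i
    have := congrFun h ⟨(i : ℕ), lt_of_lt_of_le i.2 hrη⟩
    unfold extPt at this
    rwa [dif_pos i.2, dif_pos i.2] at this
  subst hss
  have hcc : c = c' := by
    funext k i
    have hlt : r + (k : ℕ) < η := by have := k.2; omega
    have := congrFun h ⟨r + (k : ℕ), hlt⟩
    unfold extPt at this
    rw [dif_neg (by simp only [Fin.val_mk]; omega),
      dif_neg (by simp only [Fin.val_mk]; omega)] at this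
    have hk : (⟨r + (k : ℕ) - r, by have := k.2; omega⟩ : Fin (η - r)) = k := by
      apply Fin.ext; simp
    rw [hk] at this
    have hzero : ∑ i, (c k i - c' k i) • s i = 0 := by
      rw [Finset.sum_congr rfl (fun i _ => sub_smul (c k i) (c' k i) (s i)),
        Finset.sum_sub_distrib, this, sub_self]
    have := linearIndependent_iff'.mp hs Finset.univ (fun i => c k i - c' k i) hzero i
      (Finset.mem_univ i)
    exact sub_eq_zero.mp this
  rw [hcc]

lemma count_rkw_ge (q m : ℕ) (hq : Fintype.card Fq = q) (hqm : Fintype.card Fqm = q ^ m)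
    (hq2 : 2 ≤ q) (hrm : r ≤ m) (hrη : r ≤ η) :
    (∏ i : Fin r, (q ^ m - q ^ (i : ℕ))) * q ^ (r * (η - r)) ≤
      Nat.card { v : Fin η → Fqm // rkw Fq v = r } := by
  have hfinrank : Module.finrank Fq Fqm = m := by
    have hcard : Fintype.card Fqm = q ^ Module.finrank Fq Fqm := by
      rw [← hq]; exact Module.card_eq_pow_finrank
    have : q ^ m = q ^ Module.finrank Fq Fqm := by rw [← hqm, hcard]
    exact (Nat.pow_right_injective hq2 this.symm)
  have hcard1 : Nat.card { s : Fin r → Fqm // LinearIndependent Fq s } =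
      ∏ i : Fin r, (q ^ m - q ^ (i : ℕ)) := by
    rw [← hq, ← hfinrank]
    exact card_linearIndependent (by rw [hfinrank]; exact hrm)
  have hcard2 : Nat.card (Fin (η - r) → Fin r → Fq) = q ^ (r * (η - r)) := by
    simp [Nat.card_eq_fintype_card, Fintype.card_fun, hq, ← pow_mul]
  calc (∏ i : Fin r, (q ^ m - q ^ (i : ℕ))) * q ^ (r * (η - r))
      = Nat.card ({ s : Fin r → Fqm // LinearIndependent Fq s } × (Fin (η - r) → Fin r → Fq)) := by
        rw [Nat.card_prod, hcard1, hcard2]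
    _ ≤ Nat.card { v : Fin η → Fqm // rkw Fq v = r } := by
        apply Nat.card_le_card_of_injective
          (fun p => ⟨extPt (p.1 : Fin r → Fqm) p.2, extPt_rkw hrη p.1.2 p.2⟩)
        intro p p' hpp
        exact extPt_injective hrη (by simpa [Subtype.ext_iff] using hpp)

lemma prod_factor_ge {q m : ℕ} (hq2 : 2 ≤ q) (hrm : r ≤ m) :
    (q:ℝ) ^ (m * r) * (gammaq q)⁻¹ ≤ ∏ i : Fin r, ((q:ℝ) ^ m - (q:ℝ) ^ (i : ℕ)) := by
  have hq0 : (0:ℝ) < q := by exact_mod_cast Nat.lt_of_lt_of_le (by norm_num) hq2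
  have hqne : (q:ℝ) ≠ 0 := ne_of_gt hq0
  set x : ℝ := (q:ℝ)⁻¹ with hx
  have hx0 : 0 < x := by positivity
  have hx1 : x < 1 := by
    rw [hx, inv_lt_one_iff₀]; right; exact_mod_cast Nat.lt_of_lt_of_le (by norm_num) hq2
  have hfac : ∀ i : Fin r, (q:ℝ) ^ m - (q:ℝ) ^ (i:ℕ) = (q:ℝ) ^ m * (1 - x ^ (m - (i:ℕ))) := by
    intro i
    have him : (i:ℕ) ≤ m := le_trans (le_of_lt i.2) hrm
    have key : (q:ℝ) ^ m * x ^ (m - (i:ℕ)) = (q:ℝ) ^ (i:ℕ) := by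
      rw [hx, inv_pow, ← pow_sub₀ _ hqne (Nat.sub_le m i)]
      congr 1; omega
    rw [mul_sub, mul_one, key]
  rw [Finset.prod_congr rfl (fun i _ => hfac i), Finset.prod_mul_distrib,
    Finset.prod_const, Finset.card_univ, Fintype.card_fin, ← pow_mul]
  apply mul_le_mul_of_nonneg_left _ (by positivity)
  have hnn : ∀ i : ℕ, (0:ℝ) ≤ 1 - x ^ (m - i) := by
    intro i
    have : x ^ (m - i) ≤ 1 := pow_le_one₀ hx0.le hx1.le
    linarith
  calc (gammaq q)⁻¹ ≤ ∏ i ∈ Finset.range m, (1 - x ^ (i+1)) := gammaq_inv_le hq2 _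
    _ = ∏ i ∈ Finset.range m, (1 - x ^ (m - i)) := by
        rw [← Finset.prod_range_reflect (fun j => 1 - x ^ (m - j)) m]
        apply Finset.prod_congr rfl
        intro j hj
        rw [Finset.mem_range] at hj
        show (1 - x ^ (j + 1)) = 1 - x ^ (m - (m - 1 - j))
        have hexp : m - (m - 1 - j) = j + 1 := by omega
        rw [hexp]
    _ ≤ ∏ i ∈ Finset.range r, (1 - x ^ (m - i)) := by
        rw [← Finset.prod_range_mul_prod_Ico (fun i => 1 - x ^ (m - i)) hrm]
        have h1 : ∏ i ∈ Finset.Ico r m, (1 - x ^ (m - i)) ≤ 1 :=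
          Finset.prod_le_one (fun i _ => hnn i)
            (fun i _ => by have := pow_nonneg hx0.le (m - i); linarith)
        have h2 : (0:ℝ) ≤ ∏ i ∈ Finset.range r, (1 - x ^ (m - i)) :=
          Finset.prod_nonneg (fun i _ => hnn i)
        exact mul_le_of_le_one_right h2 h1
    _ = ∏ i : Fin r, (1 - x ^ (m - (i:ℕ))) := (Fin.prod_univ_eq_prod_range _ r).symm

end count

theorem stmt8 (q m ℓ η t : ℕ) (Fq Fqm : Type) [Field Fq] [Fintype Fq] [Field Fqm]
    [Fintype Fqm] [Algebra Fq Fqm] (hq : Fintype.card Fq = q)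
    (hqm : Fintype.card Fqm = q ^ m) (hℓ : 0 < ℓ) (hη : 0 < η) (hm : 0 < m)
    (ht : t ≤ ℓ * min m η) (hdvd : ℓ ∣ t) :
    (q : ℝ) ^ ((((m : ℝ) + η) - (t : ℝ) / ℓ) * t) * ((gammaq q) ^ ℓ)⁻¹ ≤
      (VolS Fq Fqm ℓ η t : ℝ) := by
  classical
  have hq2 : 2 ≤ q := by
    have : 1 < Fintype.card Fq := Fintype.one_lt_card
    omega
  obtain ⟨r, rfl⟩ := hdvd
  have hrmin : r ≤ min m η := Nat.le_of_mul_le_mul_left ht hℓ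
  have hrm : r ≤ m := le_trans hrmin (min_le_left _ _)
  have hrη : r ≤ η := le_trans hrmin (min_le_right _ _)
  set N := Nat.card { v : Fin η → Fqm // rkw Fq v = r } with hN
  -- Step 1: `N ^ ℓ ≤ VolS`
  have hstep1 : N ^ ℓ ≤ VolS Fq Fqm ℓ η (ℓ * r) := by
    rw [VolS]
    have hcardpow : Nat.card (Fin ℓ → { v : Fin η → Fqm // rkw Fq v = r }) = N ^ ℓ := by
      rw [Nat.card_fun, Nat.card_eq_fintype_card (α := Fin ℓ), Fintype.card_fin]
    rw [← hcardpow]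
    apply Nat.card_le_card_of_injective
      (fun f => (⟨fun i => (f i).1, by
        unfold srw
        rw [Finset.sum_congr rfl (fun i _ => (f i).2), Finset.sum_const, Finset.card_univ,
          Fintype.card_fin, smul_eq_mul]⟩ :
        { x : Fin ℓ → Fin η → Fqm // srw Fq x = ℓ * r }))
    intro f g hfg
    simp only [Subtype.mk.injEq] at hfg
    funext i
    exact Subtype.ext (congrFun hfg i)
  -- Step 2: real lower bound on `N`
  have hNreal : (q:ℝ) ^ (m * r + r * (η - r)) * (gammaq q)⁻¹ ≤ (N:ℝ) := by
    have hcount := count_rkw_ge (Fq := Fq) (Fqm := Fqm) q m hq hqm hq2 hrm hrη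
    have hcast : ((∏ i : Fin r, (q ^ m - q ^ (i : ℕ))) * q ^ (r * (η - r)) : ℕ) =
        ((∏ i : Fin r, ((q:ℝ) ^ m - (q:ℝ) ^ (i : ℕ))) * (q:ℝ) ^ (r * (η - r)) : ℝ) := by
      push_cast
      congr 1
      apply Finset.prod_congr rfl
      intro i _
      have : q ^ (i:ℕ) ≤ q ^ m := Nat.pow_le_pow_right (by omega) (le_trans (le_of_lt i.2) hrm)
      push_cast [Nat.cast_sub this]
      ring
    calc (q:ℝ) ^ (m * r + r * (η - r)) * (gammaq q)⁻¹
        = ((q:ℝ) ^ (m * r) * (gammaq q)⁻¹) * (q:ℝ) ^ (r * (η - r)) := by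
          rw [pow_add]; ring
      _ ≤ (∏ i : Fin r, ((q:ℝ) ^ m - (q:ℝ) ^ (i : ℕ))) * (q:ℝ) ^ (r * (η - r)) := by
          apply mul_le_mul_of_nonneg_right (prod_factor_ge hq2 hrm) (by positivity)
      _ = ((∏ i : Fin r, (q ^ m - q ^ (i : ℕ))) * q ^ (r * (η - r)) : ℕ) := hcast.symm
      _ ≤ (N:ℝ) := by exact_mod_cast hcount
  -- Step 3: combine
  have hγ1 : 1 ≤ gammaq q := one_le_gammaq hq2
  have hγpos : 0 < gammaq q := lt_of_lt_of_le one_pos hγ1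
  have hq0 : (0:ℝ) < q := by exact_mod_cast Nat.lt_of_lt_of_le (by norm_num) hq2
  have hbase_nonneg : (0:ℝ) ≤ (q:ℝ) ^ (m * r + r * (η - r)) * (gammaq q)⁻¹ := by positivity
  have hpow : ((q:ℝ) ^ (m * r + r * (η - r)) * (gammaq q)⁻¹) ^ ℓ ≤ (N:ℝ) ^ ℓ :=
    pow_le_pow_left₀ hbase_nonneg hNreal ℓ
  have hlhs_eq : ((q:ℝ) ^ (m * r + r * (η - r)) * (gammaq q)⁻¹) ^ ℓ =
      (q:ℝ) ^ ((m * r + r * (η - r)) * ℓ) * ((gammaq q) ^ ℓ)⁻¹ := by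
    rw [mul_pow, ← pow_mul, inv_pow]
  have hexpeq : (q : ℝ) ^ ((((m : ℝ) + η) - ((ℓ * r : ℕ) : ℝ) / ℓ) * ((ℓ * r : ℕ) : ℝ)) =
      (q:ℝ) ^ ((m * r + r * (η - r)) * ℓ) := by
    have hE : (((m : ℝ) + η) - ((ℓ * r : ℕ) : ℝ) / ℓ) * ((ℓ * r : ℕ) : ℝ) =
        (((m * r + r * (η - r)) * ℓ : ℕ) : ℝ) := by
      have hℓ0 : (ℓ:ℝ) ≠ 0 := by exact_mod_cast Nat.pos_iff_ne_zero.mp hℓ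
      push_cast [Nat.cast_sub hrη]
      rw [mul_div_cancel_left₀ _ hℓ0]
      ring
    rw [hE, Real.rpow_natCast]
  calc (q : ℝ) ^ ((((m : ℝ) + η) - ((ℓ * r : ℕ) : ℝ) / ℓ) * ((ℓ * r : ℕ) : ℝ)) *
        ((gammaq q) ^ ℓ)⁻¹
      = ((q:ℝ) ^ (m * r + r * (η - r)) * (gammaq q)⁻¹) ^ ℓ := by
        rw [hexpeq, hlhs_eq]
    _ ≤ (N:ℝ) ^ ℓ := hpow
    _ = ((N ^ ℓ : ℕ) : ℝ) := by push_cast; ring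
    _ ≤ (VolS Fq Fqm ℓ η (ℓ * r) : ℝ) := by exact_mod_cast hstep1
end

section
/- (Sphere-packing bound in the sum-rank metric) For any 𝔽_{q^m}-linear code C ⊆ 𝔽_{q^m}^n of dimension k and minimum sum-rank distance d, it holds that q^{mk} · Vol_{B_ℓ}(⌊(d-1)/2⌋) ≤ q^{mn}. -/
section Aux

variable (Fq : Type) {Fqm : Type} [Field Fq] [Field Fqm] [Fintype Fqm] [Algebra Fq Fqm]

lemma aux_rkw_eq_zero {η : ℕ} {v : Fin η → Fqm} (h : rkw Fq v = 0) : v = 0 := by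
  haveI : Module.Finite Fq Fqm := Module.Finite.of_finite
  rw [rkw, Submodule.finrank_eq_zero] at h
  funext i
  have : v i ∈ Submodule.span Fq (Set.range v) := Submodule.subset_span ⟨i, rfl⟩
  rw [h] at this
  simpa using this

lemma aux_srw_eq_zero {ℓ η : ℕ} {x : Fin ℓ → Fin η → Fqm} (h : srw Fq x = 0) : x = 0 := by
  rw [srw, Finset.sum_eq_zero_iff] at h
  funext i
  have := aux_rkw_eq_zero Fq (h i (Finset.mem_univ i))
  simpa using this

lemma aux_rkw_sub_le {η : ℕ} (a b : Fin η → Fqm) : rkw Fq (a - b) ≤ rkw Fq a + rkw Fq b := by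
  haveI : Module.Finite Fq Fqm := Module.Finite.of_finite
  have hle : Submodule.span Fq (Set.range (a - b)) ≤
      Submodule.span Fq (Set.range a) ⊔ Submodule.span Fq (Set.range b) := by
    rw [Submodule.span_le]
    rintro _ ⟨i, rfl⟩
    have ha : a i ∈ Submodule.span Fq (Set.range a) := Submodule.subset_span ⟨i, rfl⟩
    have hb : b i ∈ Submodule.span Fq (Set.range b) := Submodule.subset_span ⟨i, rfl⟩
    exact Submodule.sub_mem _ (Submodule.mem_sup_left ha) (Submodule.mem_sup_right hb)
  calc rkw Fq (a - b) ≤ Module.finrank Fq ↥(Submodule.span Fq (Set.range a) ⊔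
        Submodule.span Fq (Set.range b)) := Submodule.finrank_mono hle
    _ ≤ rkw Fq a + rkw Fq b := by
      have := Submodule.finrank_sup_add_finrank_inf_eq (Submodule.span Fq (Set.range a))
        (Submodule.span Fq (Set.range b))
      rw [rkw, rkw]
      omega

lemma aux_srw_sub_le {ℓ η : ℕ} (a b : Fin ℓ → Fin η → Fqm) :
    srw Fq (a - b) ≤ srw Fq a + srw Fq b := by
  rw [srw, srw, srw, ← Finset.sum_add_distrib]
  exact Finset.sum_le_sum fun i _ => aux_rkw_sub_le Fq (a i) (b i)

end Aux

/-- Sphere-packing bound in the sum-rank metric. -/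
theorem stmt11 (q m ℓ η k d : ℕ) (Fq Fqm : Type) [Field Fq] [Fintype Fq] [Field Fqm]
    [Fintype Fqm] [Algebra Fq Fqm] (hq : Fintype.card Fq = q)
    (hqm : Fintype.card Fqm = q ^ m) (hℓ : 0 < ℓ) (hη : 0 < η) (hm : 0 < m)
    (C : Submodule Fqm (Fin ℓ → Fin η → Fqm)) (hk : Module.finrank Fqm C = k)
    (hd1 : ∀ c ∈ C, c ≠ 0 → d ≤ srw Fq c)
    (hd2 : ∃ c ∈ C, c ≠ 0 ∧ srw Fq c = d) :
    q ^ (m * k) * VolB Fq Fqm ℓ η ((d - 1) / 2) ≤ q ^ (m * (ℓ * η)) := by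
  classical
  obtain ⟨c0, hc0C, hc0ne, hc0d⟩ := hd2
  have hdpos : 0 < d := by
    rcases Nat.eq_zero_or_pos d with h | h
    · exact absurd (aux_srw_eq_zero Fq (h ▸ hc0d)) hc0ne
    · exact h
  set r := (d - 1) / 2 with hr
  let B := {x : Fin ℓ → Fin η → Fqm // srw Fq x ≤ r}
  let f : C × B → (Fin ℓ → Fin η → Fqm) := fun p => p.1.1 + p.2.1
  have hinj : Function.Injective f := by
    rintro ⟨⟨c1, hc1⟩, ⟨e1, he1⟩⟩ ⟨⟨c2, hc2⟩, ⟨e2, he2⟩⟩ h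
    simp only [f] at h
    have hcc : c1 - c2 = e2 - e1 := by
      apply sub_eq_sub_iff_add_eq_add.mpr
      rw [h]; ring
    have hw : srw Fq (c1 - c2) ≤ 2 * r := by
      rw [hcc]
      calc srw Fq (e2 - e1) ≤ srw Fq e2 + srw Fq e1 := aux_srw_sub_le Fq e2 e1
        _ ≤ r + r := add_le_add he2 he1
        _ = 2 * r := (two_mul r).symm
    have hc12 : c1 = c2 := by
      by_contra hne
      have hle := hd1 (c1 - c2) (C.sub_mem hc1 hc2) (sub_ne_zero.mpr hne)
      have : 2 * r ≤ d - 1 := by omega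
      omega
    subst hc12
    have he12 : e1 = e2 := by
      have := hcc
      rw [sub_self] at this
      have := sub_eq_zero.mp this.symm
      exact this.symm
    simp [he12]
  have hcard := Nat.card_le_card_of_injective f hinj
  rw [Nat.card_prod] at hcard
  haveI : Fintype C := Fintype.ofFinite _
  have h1 : Nat.card C = q ^ (m * k) := by
    rw [Nat.card_eq_fintype_card, Module.card_eq_pow_finrank (K := Fqm), hqm, hk, ← pow_mul]
  have h2 : Nat.card (Fin ℓ → Fin η → Fqm) = q ^ (m * (ℓ * η)) := by
    rw [Nat.card_eq_fintype_card]
    simp [Fintype.card_fun, hqm, ← pow_mul]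
    ring_nf
  rw [h1, h2] at hcard
  exact hcard
end

section
/- (Gilbert–Varshamov bound in the sum-rank metric) If positive integers ℓ, n = ℓη, k, d ≤ μℓ satisfy q^{m(k-1)} · Vol_{B_ℓ}(d-1) < q^{mn}, then there exists an 𝔽_{q^m}-linear code of length n, dimension k, and minimum sum-rank distance at least d. -/
section Aux

variable {Fq Fqm : Type} [Field Fq] [Field Fqm] [Algebra Fq Fqm] {ℓ η : ℕ}

lemma rkw_zero : rkw Fq (0 : Fin η → Fqm) = 0 := by
  unfold rkw
  rw [Submodule.span_eq_bot.mpr (by rintro _ ⟨j, rfl⟩; rfl)]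
  exact finrank_bot Fq Fqm

lemma srw_zero : srw Fq (0 : Fin ℓ → Fin η → Fqm) = 0 := by
  unfold srw
  exact Finset.sum_eq_zero fun i _ => rkw_zero

lemma rkw_smul (r : Fqm) (hr : r ≠ 0) (v : Fin η → Fqm) :
    rkw Fq (r • v) = rkw Fq v := by
  unfold rkw
  have hrange : Set.range (r • v) = (LinearMap.mulLeft Fq r) '' Set.range v := by
    rw [show (r • v) = (fun a => r * a) ∘ v from funext fun j => by
      simp [smul_eq_mul], Set.range_comp]
    rfl
  rw [hrange, ← Submodule.map_span]
  exact (LinearEquiv.finrank_eq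
    (Submodule.equivMapOfInjective _ (fun a b h => mul_left_cancel₀ hr h) _)).symm

lemma srw_smul (r : Fqm) (hr : r ≠ 0) (x : Fin ℓ → Fin η → Fqm) :
    srw Fq (r • x) = srw Fq x := by
  unfold srw
  exact Finset.sum_congr rfl fun i _ => rkw_smul r hr (x i)

end Aux

/-- Gilbert–Varshamov bound in the sum-rank metric. -/
theorem stmt13 (q m ℓ η k d : ℕ) (Fq Fqm : Type) [Field Fq] [Fintype Fq] [Field Fqm]
    [Fintype Fqm] [Algebra Fq Fqm] (hq : Fintype.card Fq = q)
    (hqm : Fintype.card Fqm = q ^ m) (hℓ : 0 < ℓ) (hη : 0 < η) (hm : 0 < m)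
    (hk : 0 < k) (hd0 : 0 < d) (hd : d ≤ min m η * ℓ)
    (hGV : q ^ (m * (k - 1)) * VolB Fq Fqm ℓ η (d - 1) < q ^ (m * (ℓ * η))) :
    ∃ C : Submodule Fqm (Fin ℓ → Fin η → Fqm),
      Module.finrank Fqm C = k ∧ ∀ c ∈ C, c ≠ 0 → d ≤ srw Fq c := by
  classical
  have hq1 : 1 ≤ q := hq ▸ Fintype.card_pos
  have hcardM : Fintype.card (Fin ℓ → Fin η → Fqm) = q ^ (m * (ℓ * η)) := by
    rw [Fintype.card_fun, Fintype.card_fun, hqm, Fintype.card_fin, Fintype.card_fin,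
      ← pow_mul, ← pow_mul]
    ring_nf
  have hVolB : VolB Fq Fqm ℓ η (d - 1)
      = Fintype.card {v : Fin ℓ → Fin η → Fqm // srw Fq v ≤ d - 1} :=
    Nat.card_eq_fintype_card
  have main : ∀ j, j ≤ k → ∃ C : Submodule Fqm (Fin ℓ → Fin η → Fqm),
      Module.finrank Fqm C = j ∧ ∀ c ∈ C, c ≠ 0 → d ≤ srw Fq c := by
    intro j
    induction j with
    | zero =>
      intro _
      refine ⟨⊥, finrank_bot _ _, ?_⟩
      intro c hc hc0
      exact absurd (Submodule.mem_bot _ |>.mp hc) hc0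
    | succ j ih =>
      intro hjk
      obtain ⟨C, hCrank, hCmin⟩ := ih (by omega)
      haveI : Fintype C := Fintype.ofFinite C
      have hcardC : Fintype.card C = q ^ (m * j) := by
        have h := Module.card_eq_pow_finrank (K := Fqm) (V := C)
        rw [hqm, hCrank, ← pow_mul] at h
        exact h
      have hexists : ∃ x : Fin ℓ → Fin η → Fqm, ∀ c ∈ C, d ≤ srw Fq (x - c) := by
        by_contra h
        push_neg at h
        have hsurj : Function.Surjective
            (fun p : C × {v : Fin ℓ → Fin η → Fqm // srw Fq v ≤ d - 1} =>
              (p.1 : Fin ℓ → Fin η → Fqm) + (p.2 : Fin ℓ → Fin η → Fqm)) := by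
          intro x
          obtain ⟨c, hc, hlt⟩ := h x
          exact ⟨⟨⟨c, hc⟩, ⟨x - c, by omega⟩⟩, by simp⟩
        have hle := Fintype.card_le_of_surjective _ hsurj
        rw [Fintype.card_prod, hcardC, hcardM, ← hVolB] at hle
        have h2 : q ^ (m * j) * VolB Fq Fqm ℓ η (d - 1)
            ≤ q ^ (m * (k - 1)) * VolB Fq Fqm ℓ η (d - 1) :=
          Nat.mul_le_mul_right _ (Nat.pow_le_pow_right hq1 (by
            have : j ≤ k - 1 := by omega
            exact Nat.mul_le_mul_left m this))
        omega
      obtain ⟨x, hx⟩ := hexists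
      have hxC : x ∉ C := by
        intro hxC
        have := hx x hxC
        rw [sub_self, srw_zero] at this
        omega
      have hx0 : x ≠ 0 := by
        intro h0
        have := hx 0 C.zero_mem
        rw [h0, sub_self, srw_zero] at this
        omega
      have hinf : C ⊓ (Fqm ∙ x) = ⊥ := by
        rw [eq_bot_iff]
        rintro y hy
        rw [Submodule.mem_inf] at hy
        obtain ⟨hyC, hyS⟩ := hy
        obtain ⟨r, rfl⟩ := Submodule.mem_span_singleton.mp hyS
        rcases eq_or_ne r 0 with hr | hr
        · simp [hr]
        · exact absurd (by
            have := C.smul_mem r⁻¹ hyC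
            rwa [smul_smul, inv_mul_cancel₀ hr, one_smul] at this) hxC
      refine ⟨C ⊔ (Fqm ∙ x), ?_, ?_⟩
      · have h1 := Submodule.finrank_sup_add_finrank_inf_eq C (Fqm ∙ x)
        rw [hinf, finrank_bot, finrank_span_singleton hx0, hCrank] at h1
        omega
      · intro c hc hc0
        rw [Submodule.mem_sup] at hc
        obtain ⟨y, hy, z, hz, rfl⟩ := hc
        obtain ⟨r, rfl⟩ := Submodule.mem_span_singleton.mp hz
        rcases eq_or_ne r 0 with hr | hr
        · subst hr
          rw [zero_smul, add_zero] at hc0 ⊢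
          exact hCmin y hy hc0
        · calc d ≤ srw Fq (x - -(r⁻¹ • y)) :=
                hx (-(r⁻¹ • y)) (C.neg_mem (C.smul_mem _ hy))
            _ = srw Fq (r⁻¹ • (y + r • x)) := by
                rw [smul_add, smul_smul, inv_mul_cancel₀ hr, one_smul,
                  sub_neg_eq_add, add_comm]
            _ = srw Fq (y + r • x) := srw_smul r⁻¹ (inv_ne_zero hr) _
  exact main k le_rfl
end
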